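/- arXiv:2303.12753 — 3 statements merged into one kernel-verified Lean document; each statement's English description precedes it below -/
import Mathlib

section
/- Let a be a binary hypervector of dimension d, let x be a natural number, and for each k with k·x ≤ d let S_k = {t : (t : ℕ) < k·x} and r_k = a + 1_{S_k} (flip the first k·x coordinates of a). Then for all i, j with i·x ≤ d and j·x ≤ d, the Hamming distance satisfies d_H(r_i, r_j) = x · |i − j|. -/
open Finset

/-- The flip hypervector of a set of coordinates: `1` on `S`, `0` elsewhere. -/
def flipVec {d : ℕ} (S : Finset (Fin d)) : Fin d → ZMod 2 := fun i => if i ∈ S then 1 else 0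

lemma aux_card (d m M : ℕ) (hM : M ≤ d) :
    (univ.filter fun t : Fin d => m ≤ (t : ℕ) ∧ (t : ℕ) < M).card = M - m := by
  rw [← Nat.card_Ico]
  refine Finset.card_bij (fun t _ => (t : ℕ)) ?_ ?_ ?_
  · intro t ht
    simp only [mem_filter] at ht
    simp [Finset.mem_Ico, ht.2.1, ht.2.2]
  · intro t₁ h₁ t₂ h₂ h
    exact Fin.val_injective h
  · intro n hn
    simp only [Finset.mem_Ico] at hn
    exact ⟨⟨n, lt_of_lt_of_le hn.2 hM⟩, by simp [hn.1, hn.2], rfl⟩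

lemma aux_hd (d x : ℕ) (a : Fin d → ZMod 2) (i j : ℕ)
    (hj : j * x ≤ d) (hij : i ≤ j) :
    hammingDist (a + flipVec (univ.filter fun t : Fin d => (t : ℕ) < i * x))
                (a + flipVec (univ.filter fun t : Fin d => (t : ℕ) < j * x))
      = j * x - i * x := by
  rw [hammingDist, ← aux_card d (i * x) (j * x) hj]
  congr 1
  apply Finset.filter_congr
  intro t _
  simp only [Pi.add_apply, flipVec, mem_filter, mem_univ, true_and, ne_eq,
    add_right_inj]
  have hle : i * x ≤ j * x := Nat.mul_le_mul_right x hij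
  constructor
  · intro h
    by_cases h1 : (t : ℕ) < i * x
    · exfalso; exact h (by simp [h1, lt_of_lt_of_le h1 hle])
    · by_cases h2 : (t : ℕ) < j * x
      · exact ⟨le_of_not_gt h1, h2⟩
      · exfalso; exact h (by simp [h1, h2])
  · intro ⟨h1, h2⟩
    simp [not_lt.2 h1, h2]

lemma aux_main (d x : ℕ) (a : Fin d → ZMod 2) (i j : ℕ)
    (hj : j * x ≤ d) (hij : i ≤ j) :
    (hammingDist (a + flipVec (univ.filter fun t : Fin d => (t : ℕ) < i * x))
                 (a + flipVec (univ.filter fun t : Fin d => (t : ℕ) < j * x)) : ℤ)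
      = x * |(i : ℤ) - (j : ℤ)| := by
  rw [aux_hd d x a i j hj hij]
  have hle : i * x ≤ j * x := Nat.mul_le_mul_right x hij
  rw [abs_sub_comm, abs_of_nonneg (sub_nonneg.2 (by exact_mod_cast hij))]
  push_cast [Nat.sub_add_cancel hle, hle]
  ring

/-- Flipping the first `k·x` coordinates of `a` yields `r_k`; then
`d_H(r_i, r_j) = x · |i − j|` whenever `i·x ≤ d` and `j·x ≤ d`. -/
theorem stmt3 (d x : ℕ) (a : Fin d → ZMod 2) (i j : ℕ)
    (hi : i * x ≤ d) (hj : j * x ≤ d) :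
    (hammingDist (a + flipVec (univ.filter fun t : Fin d => (t : ℕ) < i * x))
                 (a + flipVec (univ.filter fun t : Fin d => (t : ℕ) < j * x)) : ℤ)
      = x * |(i : ℤ) - (j : ℤ)| := by
  rcases le_total i j with h | h
  · exact aux_main d x a i j hj h
  · rw [hammingDist_comm, abs_sub_comm]
    exact aux_main d x a j i hi h
end

section
/- Let d = 2h, let r_0, c_0 be binary hypervectors of dimension d, and let x_row, x_col be natural numbers. For i with i·x_row ≤ h define the row hypervector r_i = r_0 + 1_{{t : (t:ℕ) < i·x_row}}, and for j with j·x_col ≤ h define the column hypervector c_j = c_0 + 1_{{t : h ≤ (t:ℕ) < h + j·x_col}}. Then for all valid i, i', j, j', the position hypervectors p_{(i,j)} = r_i ⊕ c_j satisfy d_H(p_{(i,j)}, p_{(i',j')}) = x_row · |i − i'| + x_col · |j − j'|. -/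
open Finset

/-- Row hypervector `r_i`: flip the first `i · x_row` coordinates of `r_0`. -/
def rowHV {d : ℕ} (r0 : Fin d → ZMod 2) (xr i : ℕ) : Fin d → ZMod 2 :=
  r0 + flipVec (univ.filter fun t : Fin d => (t : ℕ) < i * xr)

/-- Column hypervector `c_j`: flip the `j · x_col` coordinates starting at position `h`. -/
def colHV {d : ℕ} (c0 : Fin d → ZMod 2) (h xc j : ℕ) : Fin d → ZMod 2 :=
  c0 + flipVec (univ.filter fun t : Fin d => h ≤ (t : ℕ) ∧ (t : ℕ) < h + j * xc)

lemma card_filter_Ico {d : ℕ} (a b : ℕ) (hb : b ≤ d) :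
    (univ.filter fun t : Fin d => a ≤ (t : ℕ) ∧ (t : ℕ) < b).card = b - a := by
  rw [← Nat.card_Ico a b]
  refine Finset.card_bij (fun t _ => (t : ℕ)) ?_ ?_ ?_
  · intro t ht
    simp only [mem_filter, mem_univ, true_and] at ht
    simp [Finset.mem_Ico, ht.1, ht.2]
  · intro t _ t' _ hh
    exact Fin.val_injective hh
  · intro n hn
    simp only [Finset.mem_Ico] at hn
    exact ⟨⟨n, lt_of_lt_of_le hn.2 hb⟩, by simp [hn.1, hn.2], rfl⟩

lemma ite_key (P Q P' Q' : Prop) [Decidable P] [Decidable Q] [Decidable P'] [Decidable Q']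
    (a b : ZMod 2) :
    (a + (if P then (1 : ZMod 2) else 0) + (b + (if Q then 1 else 0)) ≠
      a + (if P' then 1 else 0) + (b + (if Q' then 1 else 0)))
      ↔ ¬((P ↔ P') ↔ (Q ↔ Q')) := by
  by_cases hP : P <;> by_cases hQ : Q <;> by_cases hP' : P' <;> by_cases hQ' : Q' <;>
    simp [hP, hQ, hP', hQ'] <;>
    · revert a b; decide

lemma cast_maxmin_mul (a b x : ℕ) :
    ((max (a * x) (b * x) - min (a * x) (b * x) : ℕ) : ℤ) = x * |(a : ℤ) - b| := by
  rcases le_total a b with hab | hab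
  · have e := Nat.mul_le_mul_right x hab
    rw [max_eq_right e, min_eq_left e, abs_of_nonpos (by omega : (a : ℤ) - b ≤ 0)]
    push_cast [e]
    ring
  · have e := Nat.mul_le_mul_right x hab
    rw [max_eq_left e, min_eq_right e, abs_of_nonneg (by omega : (0:ℤ) ≤ (a : ℤ) - b)]
    push_cast [e]
    ring

/-- With `d = 2h`, rows flipping in the first half and columns in the second half, the
position hypervectors `p_(i,j) = r_i ⊕ c_j` satisfy
`d_H(p_(i,j), p_(i',j')) = x_row · |i − i'| + x_col · |j − j'|`. -/
theorem stmt6 (h d : ℕ) (hd : d = 2 * h) (r0 c0 : Fin d → ZMod 2) (xr xc : ℕ)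
    (i i' j j' : ℕ) (hi : i * xr ≤ h) (hi' : i' * xr ≤ h)
    (hj : j * xc ≤ h) (hj' : j' * xc ≤ h) :
    (hammingDist (rowHV r0 xr i + colHV c0 h xc j)
                 (rowHV r0 xr i' + colHV c0 h xc j') : ℤ)
      = xr * |(i : ℤ) - (i' : ℤ)| + xc * |(j : ℤ) - (j' : ℤ)| := by
  classical
  have hcard : hammingDist (rowHV r0 xr i + colHV c0 h xc j)
      (rowHV r0 xr i' + colHV c0 h xc j')
      = (max (i * xr) (i' * xr) - min (i * xr) (i' * xr))
        + ((h + max (j * xc) (j' * xc)) - (h + min (j * xc) (j' * xc))) := by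
    unfold hammingDist
    have hset : (univ.filter fun t : Fin d =>
        (rowHV r0 xr i + colHV c0 h xc j) t ≠ (rowHV r0 xr i' + colHV c0 h xc j') t)
        = (univ.filter fun t : Fin d =>
            (min (i * xr) (i' * xr) ≤ (t : ℕ) ∧ (t : ℕ) < max (i * xr) (i' * xr))
          ∨ (h + min (j * xc) (j' * xc) ≤ (t : ℕ) ∧ (t : ℕ) < h + max (j * xc) (j' * xc))) := by
      apply Finset.filter_congr
      intro t _
      have htd : (t : ℕ) < d := t.isLt
      simp only [rowHV, colHV, flipVec, Pi.add_apply, mem_filter, mem_univ, true_and]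
      rw [ite_key]
      omega
    rw [hset, Finset.filter_or,
      Finset.card_union_of_disjoint, card_filter_Ico, card_filter_Ico]
    · omega
    · omega
    · rw [Finset.disjoint_left]
      intro t ht1 ht2
      simp only [mem_filter, mem_univ, true_and] at ht1 ht2
      omega
  rw [hcard]
  have h2 : (h + max (j * xc) (j' * xc)) - (h + min (j * xc) (j' * xc))
      = max (j * xc) (j' * xc) - min (j * xc) (j' * xc) := by omega
  rw [h2, Nat.cast_add, cast_maxmin_mul, cast_maxmin_mul]
end

section
/- Let d = 2h, let r_0, c_0 be binary hypervectors of dimension d, let x and β > 0 be natural numbers, and define the block row hypervectors r_i = r_0 + 1_{{t : (t:ℕ) < ⌊i/β⌋·x}} and block column hypervectors c_j = c_0 + 1_{{t : h ≤ (t:ℕ) < h + ⌊j/β⌋·x}}, for indices whose flipped segments fit in each half (⌊i/β⌋·x ≤ h and ⌊j/β⌋·x ≤ h). Then the position hypervectors p_{(i,j)} = r_i ⊕ c_j satisfy d_H(p_{(i,j)}, p_{(i',j')}) = x · ( |⌊i/β⌋ − ⌊i'/β⌋| + |⌊j/β⌋ − ⌊j'/β⌋| ); i.e., the block decay encoding follows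 the Manhattan distance computed on blocks of β rows and β columns. -/
open Finset

/-- Block row hypervector `r_i`: flip the first `⌊i/β⌋ · x` coordinates of `r_0`. -/
def blockRowHV {d : ℕ} (r0 : Fin d → ZMod 2) (x β i : ℕ) : Fin d → ZMod 2 :=
  r0 + flipVec (univ.filter fun t : Fin d => (t : ℕ) < (i / β) * x)

/-- Block column hypervector `c_j`: flip the `⌊j/β⌋ · x` coordinates starting at `h`. -/
def blockColHV {d : ℕ} (c0 : Fin d → ZMod 2) (h x β j : ℕ) : Fin d → ZMod 2 :=
  c0 + flipVec (univ.filter fun t : Fin d => h ≤ (t : ℕ) ∧ (t : ℕ) < h + (j / β) * x)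

lemma card_interval_filter (d l r : ℕ) (hrd : r ≤ d) :
    (univ.filter fun t : Fin d => l ≤ (t : ℕ) ∧ (t : ℕ) < r).card = r - l := by
  have e : (univ.filter fun t : Fin d => l ≤ (t : ℕ) ∧ (t : ℕ) < r)
      = (Finset.Ico l r).attachFin (fun m hm => lt_of_lt_of_le (Finset.mem_Ico.mp hm).2 hrd) := by
    ext t
    simp [Finset.mem_attachFin, Finset.mem_Ico]
  rw [e, Finset.card_attachFin, Nat.card_Ico]

lemma key_lemma (h d : ℕ) (r0 c0 : Fin d → ZMod 2) (x : ℕ)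
    (a a' b b' : ℕ) (hia : a * x ≤ h) (hia' : a' * x ≤ h) (t : Fin d) :
    ((r0 + flipVec (univ.filter fun t : Fin d => (t : ℕ) < a * x) +
        (c0 + flipVec (univ.filter fun t : Fin d => h ≤ (t : ℕ) ∧ (t : ℕ) < h + b * x))) t
      ≠ (r0 + flipVec (univ.filter fun t : Fin d => (t : ℕ) < a' * x) +
        (c0 + flipVec (univ.filter fun t : Fin d => h ≤ (t : ℕ) ∧ (t : ℕ) < h + b' * x))) t) ↔
      ((min a a' * x ≤ (t : ℕ) ∧ (t : ℕ) < max a a' * x) ∨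
       (h + min b b' * x ≤ (t : ℕ) ∧ (t : ℕ) < h + max b b' * x)) := by
  have rearr : ∀ p q s1 s2 s3 s4 : ZMod 2,
      (p + s1 + (q + s2) ≠ p + s3 + (q + s4)) ↔ ¬(s1 + s2 = s3 + s4) := by
    intro p q s1 s2 s3 s4
    rw [show p + s1 + (q + s2) = p + q + (s1 + s2) by ring,
        show p + s3 + (q + s4) = p + q + (s3 + s4) by ring]
    simp
  simp only [flipVec, Pi.add_apply, mem_filter, mem_univ, true_and]
  rw [rearr]
  rcases le_total a a' with hA | hA <;> rcases le_total b b' with hB | hB <;>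
    [rw [min_eq_left hA, max_eq_right hA, min_eq_left hB, max_eq_right hB];
     rw [min_eq_left hA, max_eq_right hA, min_eq_right hB, max_eq_left hB];
     rw [min_eq_right hA, max_eq_left hA, min_eq_left hB, max_eq_right hB];
     rw [min_eq_right hA, max_eq_left hA, min_eq_right hB, max_eq_left hB]] <;>
  · have hax := Nat.mul_le_mul_right x hA
    have hbx := Nat.mul_le_mul_right x hB
    by_cases h1 : (t : ℕ) < a * x <;>
    by_cases h1' : (t : ℕ) < a' * x <;>
    by_cases h2 : h ≤ (t : ℕ) ∧ (t : ℕ) < h + b * x <;>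
    by_cases h2' : h ≤ (t : ℕ) ∧ (t : ℕ) < h + b' * x <;>
    simp only [h1, h1', h2, h2', if_true, if_false, iff_true, iff_false] <;>
    simp [show (1 : ZMod 2) + 1 = 0 from rfl, -not_and] <;>
    first | omega | (split_ifs <;> simp_all <;> omega)

/-- With `d = 2h` and `β > 0`, the block decay encoding follows the Manhattan distance
computed on blocks of `β` rows and `β` columns:
`d_H(p_(i,j), p_(i',j')) = x · (|⌊i/β⌋ − ⌊i'/β⌋| + |⌊j/β⌋ − ⌊j'/β⌋|)`. -/
theorem stmt8 (h d : ℕ) (hd : d = 2 * h) (r0 c0 : Fin d → ZMod 2) (x β : ℕ) (hβ : 0 < β)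
    (i i' j j' : ℕ)
    (hi : (i / β) * x ≤ h) (hi' : (i' / β) * x ≤ h)
    (hj : (j / β) * x ≤ h) (hj' : (j' / β) * x ≤ h) :
    (hammingDist (blockRowHV r0 x β i + blockColHV c0 h x β j)
                 (blockRowHV r0 x β i' + blockColHV c0 h x β j') : ℤ)
      = x * (|((i / β : ℕ) : ℤ) - ((i' / β : ℕ) : ℤ)| +
             |((j / β : ℕ) : ℤ) - ((j' / β : ℕ) : ℤ)|) := by
  set a := i / β with ha
  set a' := i' / β with ha'
  set b := j / β with hb
  set b' := j' / β with hb'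
  have hMa : max a a' * x ≤ h := by
    rcases max_cases a a' with ⟨e, _⟩ | ⟨e, _⟩ <;> rw [e] <;> assumption
  have hMb : max b b' * x ≤ h := by
    rcases max_cases b b' with ⟨e, _⟩ | ⟨e, _⟩ <;> rw [e] <;> assumption
  have hma : min a a' * x ≤ max a a' * x := Nat.mul_le_mul_right x min_le_max
  have hmb : min b b' * x ≤ max b b' * x := Nat.mul_le_mul_right x min_le_max
  have hcard : hammingDist (blockRowHV r0 x β i + blockColHV c0 h x β j)
      (blockRowHV r0 x β i' + blockColHV c0 h x β j')
      = (max a a' * x - min a a' * x) + (max b b' * x - min b b' * x) := by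
    show (univ.filter fun t : Fin d => _ ≠ _).card = _
    simp only [blockRowHV, blockColHV, ← ha, ← ha', ← hb, ← hb']
    rw [filter_congr (fun t _ => key_lemma h d r0 c0 x a a' b b' hi hi' t)]
    rw [filter_or, card_union_of_disjoint]
    · rw [card_interval_filter d _ _ (by omega),
        card_interval_filter d _ _ (by omega)]
      omega
    · rw [Finset.disjoint_filter]
      intro t _ hA hB
      omega
  rw [hcard]
  have hcast : ∀ u u' v v' : ℕ, u ≤ u' → v ≤ v' →
      (((u' * x - u * x) + (v' * x - v * x) : ℕ) : ℤ)
        = x * (|(u : ℤ) - (u' : ℤ)| + |(v : ℤ) - (v' : ℤ)|) := by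
    intro u u' v v' huu hvv
    rw [abs_of_nonpos (by push_cast; omega), abs_of_nonpos (by push_cast; omega)]
    have h1 : u * x ≤ u' * x := Nat.mul_le_mul_right x huu
    have h2 : v * x ≤ v' * x := Nat.mul_le_mul_right x hvv
    push_cast [h1, h2]
    ring
  rcases le_total a a' with hA | hA <;> rcases le_total b b' with hB | hB <;>
    [rw [min_eq_left hA, max_eq_right hA, min_eq_left hB, max_eq_right hB];
     rw [min_eq_left hA, max_eq_right hA, min_eq_right hB, max_eq_left hB];
     rw [min_eq_right hA, max_eq_left hA, min_eq_left hB, max_eq_right hB];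
     rw [min_eq_right hA, max_eq_left hA, min_eq_right hB, max_eq_left hB]]
  · exact hcast a a' b b' hA hB
  · rw [abs_sub_comm ((b : ℤ)) (b' : ℤ)]
    exact hcast a a' b' b hA hB
  · rw [abs_sub_comm ((a : ℤ)) (a' : ℤ)]
    exact hcast a' a b b' hA hB
  · rw [abs_sub_comm ((a : ℤ)) (a' : ℤ), abs_sub_comm ((b : ℤ)) (b' : ℤ)]
    exact hcast a' a b' b hA hB
end
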